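/- arXiv:2110.06057 — 2 statements merged into one kernel-verified Lean document; each statement's English description precedes it below -/
import Mathlib

section
/- For discrete random variables X, Z with joint distribution p(z,x), the mutual information I(X;Z) is upper bounded by the double expectation E_{x ~ p(x)} E_{x' ~ p(x)} KL(p(z|x) || p(z|x')). -/
/-!
Writing `w x = p(x)` and `c x = p(·|x)`, the mutual information is `∑ x, w x * KL (c x) p(z)` and
`p(z) = ∑ x', w x' * c x'` is a mixture of the conditionals. Concavity of `log` makes
`KL q (·)` convex, so the divergence from the mixture is at most the `w`-average of the divergences
from its components.
-/

open Finset

noncomputable def KL {Z : Type*} [Fintype Z] (q r : Z → ℝ) : ℝ :=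
  ∑ z, q z * Real.log (q z / r z)

open Real

theorem KL_mixture_le_sum_mul_KL {ι Z : Type*} [Fintype Z] {s : Finset ι} {w : ι → ℝ} {q : Z → ℝ}
    {r : ι → Z → ℝ} (hw₀ : ∀ i ∈ s, 0 ≤ w i) (hw₁ : ∑ i ∈ s, w i = 1) (hq : ∀ z, 0 ≤ q z)
    (hr : ∀ i ∈ s, ∀ z, 0 < r i z) :
    KL q (fun z => ∑ i ∈ s, w i * r i z) ≤ ∑ i ∈ s, w i * KL q (r i) := by
  simp only [KL, mul_sum]
  rw [sum_comm]
  refine sum_le_sum fun z _ => ?_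
  rcases (hq z).eq_or_lt with hqz | hqz
  · simp [← hqz]
  have hmix : 0 < ∑ i ∈ s, w i * r i z := by
    simpa using (convex_Ioi (0 : ℝ)).sum_mem hw₀ hw₁ fun i hi => hr i hi z
  have jensen : ∑ i ∈ s, w i * log (r i z) ≤ log (∑ i ∈ s, w i * r i z) := by
    simpa using strictConcaveOn_log_Ioi.concaveOn.le_map_sum hw₀ hw₁ fun i hi => hr i hi z
  calc q z * log (q z / ∑ i ∈ s, w i * r i z)
      = q z * (log (q z) - log (∑ i ∈ s, w i * r i z)) := by
        rw [log_div hqz.ne' hmix.ne']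
    _ ≤ q z * (∑ i ∈ s, w i * (log (q z) - log (r i z))) := by
        gcongr
        simp only [mul_sub, sum_sub_distrib, ← sum_mul, hw₁, one_mul]
        linarith
    _ = ∑ i ∈ s, w i * (q z * log (q z / r i z)) := by
        rw [mul_sum]
        refine sum_congr rfl fun i hi => ?_
        rw [log_div hqz.ne' (hr i hi z).ne']
        ring

theorem sum_mul_log_div_eq_sum_mul_KL {X Z : Type*} [Fintype X] [Fintype Z] (p : X → Z → ℝ)
    (hrow : ∀ x, ∑ z, p x z ≠ 0) :
    ∑ x, ∑ z, p x z * log (p x z / ((∑ z', p x z') * (∑ x', p x' z)))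
      = ∑ x, (∑ z', p x z') * KL (fun z => p x z / ∑ z'', p x z'') (fun z => ∑ x', p x' z) := by
  refine sum_congr rfl fun x _ => ?_
  rw [KL, mul_sum]
  refine sum_congr rfl fun z _ => ?_
  rw [← mul_assoc, mul_div_cancel₀ _ (hrow x), div_div]

/-- For a strictly positive joint pmf `p` on `X × Z`, the mutual information
`I(X;Z)` is upper bounded by `E_{x ~ p(x)} E_{x' ~ p(x)} KL(p(z|x) ‖ p(z|x'))`. -/
theorem mutualInfo_le_doubleExp_kl {X Z : Type*} [Fintype X] [Fintype Z]
    (p : X → Z → ℝ)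
    (hpos : ∀ x z, 0 < p x z)
    (hsum : ∑ x, ∑ z, p x z = 1) :
    (∑ x, ∑ z, p x z * Real.log (p x z / ((∑ z', p x z') * (∑ x', p x' z))))
      ≤ ∑ x, (∑ z', p x z') * ∑ x', (∑ z', p x' z') *
          KL (fun z => p x z / ∑ z'', p x z'') (fun z => p x' z / ∑ z'', p x' z'') := by
  have : Nonempty Z := by
    by_contra hZ
    simp [not_nonempty_iff.mp hZ] at hsum
  have hrow : ∀ x, 0 < ∑ z, p x z := fun x => sum_pos (fun z _ => hpos x z) univ_nonempty
  have hmix : (fun z => ∑ x', p x' z)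
      = fun z => ∑ x', (∑ z', p x' z') * (p x' z / ∑ z'', p x' z'') := by
    simp only [mul_div_cancel₀ _ (hrow _).ne']
  rw [sum_mul_log_div_eq_sum_mul_KL p fun x => (hrow x).ne', hmix]
  refine sum_le_sum fun x _ => mul_le_mul_of_nonneg_left ?_ (hrow x).le
  exact KL_mixture_le_sum_mul_KL (fun x' _ => (hrow x').le) hsum
    (fun z => (div_pos (hpos x z) (hrow x)).le) fun x' _ z => div_pos (hpos x' z) (hrow x')
end

section
/- For two environments with Markov kernels p¹(z|x), p²(z|x) and a common input marginal p(x), the cross-domain mutual information I¹²(X;Z) := KL(p¹(z,x) || p²(z) p(x)) satisfies I¹²(X;Z) ≤ E_{x ~ p(x)} E_{x' ~ p(x)} KL(p¹(z|x) || p²(z|x')). -/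
open Finset

/-!
Once `p(x)` cancels inside the logarithm, only `log (p¹(z|x) / p²(z))` remains, and concavity of
`log` applied to the mixture `p²(z) = ∑ x', p(x') p²(z|x')` bounds it by
`∑ x', p(x') log (p¹(z|x) / p²(z|x'))`; averaging over `p(x) p¹(z|x)` gives the double expectation.
-/

namespace Real

variable {ι : Type*} (s : Finset ι) (w f : ι → ℝ)

theorem sum_mul_log_le_log_sum_mul (hw : ∀ i ∈ s, 0 ≤ w i) (hw₁ : ∑ i ∈ s, w i = 1)
    (hf : ∀ i ∈ s, 0 < f i) :
    ∑ i ∈ s, w i * log (f i) ≤ log (∑ i ∈ s, w i * f i) := by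
  simpa only [smul_eq_mul] using strictConcaveOn_log_Ioi.concaveOn.le_map_sum hw hw₁ hf

theorem log_div_sum_mul_le_sum_mul_log_div {a : ℝ} (ha : 0 < a) (hw : ∀ i ∈ s, 0 ≤ w i)
    (hw₁ : ∑ i ∈ s, w i = 1) (hf : ∀ i ∈ s, 0 < f i) :
    log (a / ∑ i ∈ s, w i * f i) ≤ ∑ i ∈ s, w i * log (a / f i) := by
  have hmean : 0 < ∑ i ∈ s, w i * f i := by
    simpa only [smul_eq_mul, Set.mem_Ioi] using (convex_Ioi (0 : ℝ)).sum_mem hw hw₁ hf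
  have hexpand : ∑ i ∈ s, w i * log (a / f i) = log a - ∑ i ∈ s, w i * log (f i) := by
    rw [← one_mul (log a), ← hw₁, sum_mul, ← sum_sub_distrib]
    refine sum_congr rfl fun i hi => ?_
    rw [log_div ha.ne' (hf i hi).ne']
    ring
  rw [log_div ha.ne' hmean.ne', hexpand]
  linarith [sum_mul_log_le_log_sum_mul s w f hw hw₁ hf]

end Real

theorem crossDomainMI_le_doubleExp_kl_general {X Z : Type*} [Fintype X] [Fintype Z]
    (px : X → ℝ) (k1 k2 : X → Z → ℝ)
    (hpx : ∀ x, 0 < px x) (hpxsum : ∑ x, px x = 1)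
    (hk1 : ∀ x z, 0 < k1 x z)
    (hk2 : ∀ x z, 0 < k2 x z) :
    (∑ x, ∑ z, px x * k1 x z *
        Real.log ((px x * k1 x z) / ((∑ x', px x' * k2 x' z) * px x)))
      ≤ ∑ x, px x * ∑ x', px x' * KL (k1 x) (k2 x') := by
  have hcancel : ∀ x z, (px x * k1 x z) / ((∑ x', px x' * k2 x' z) * px x)
      = k1 x z / ∑ x', px x' * k2 x' z := fun x z => by
    rw [mul_comm (px x), mul_div_mul_right _ _ (hpx x).ne']
  have hKL : ∀ x, px x * ∑ x', px x' * KL (k1 x) (k2 x')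
      = ∑ z, px x * k1 x z * ∑ x', px x' * Real.log (k1 x z / k2 x' z) := fun x => by
    simp only [KL, mul_sum]
    rw [sum_comm]
    refine sum_congr rfl fun z _ => sum_congr rfl fun x' _ => ?_
    ring
  simp only [hcancel, hKL]
  gcongr with x _ z _
  · exact (mul_pos (hpx x) (hk1 x z)).le
  · exact Real.log_div_sum_mul_le_sum_mul_log_div _ _ _ (hk1 x z)
      (fun x' _ => (hpx x').le) hpxsum (fun x' _ => hk2 x' z)

/-- Cross-domain mutual information bound:
`I¹²(X;Z) = KL(p¹(z,x) ‖ p²(z) p(x)) ≤ E_{x ~ p} E_{x' ~ p} KL(p¹(z|x) ‖ p²(z|x'))`,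
where `p¹(z,x) = p(x) p¹(z|x)` and `p²(z) = ∑ x, p(x) p²(z|x)`. -/
theorem crossDomainMI_le_doubleExp_kl {X Z : Type*} [Fintype X] [Fintype Z]
    (px : X → ℝ) (k1 k2 : X → Z → ℝ)
    (hpx : ∀ x, 0 < px x) (hpxsum : ∑ x, px x = 1)
    (hk1 : ∀ x z, 0 < k1 x z) (hk1sum : ∀ x, ∑ z, k1 x z = 1)
    (hk2 : ∀ x z, 0 < k2 x z) (hk2sum : ∀ x, ∑ z, k2 x z = 1) :
    (∑ x, ∑ z, px x * k1 x z *
        Real.log ((px x * k1 x z) / ((∑ x', px x' * k2 x' z) * px x)))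
      ≤ ∑ x, px x * ∑ x', px x' * KL (k1 x) (k2 x') :=
  crossDomainMI_le_doubleExp_kl_general px k1 k2 hpx hpxsum hk1 hk2
end
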